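/- arXiv:2009.07915 — 4 statements merged into one kernel-verified Lean document; each statement's English description precedes it below -/
import Mathlib

section
/- Assume M ≥ 1 and R > 0. At every real number a such that 1 + a·(x_i − x_A) ≠ 0 for all i with y_i > 0 and g(a) ≠ 0, the function F is differentiable with F'(a) = R/2 + (M·R/2)·g'(a)/g(a)², and F'(a) ≤ 0. -/
/-!
Differentiating `F` gives `F'(a) = (R/2) · (1 - M·S/g(a)²)` with
`S = ∑ yᵢ tᵢ²/(1 + a tᵢ)²` and `tᵢ = xᵢ - x_A`, since `g'(a) = -S`. Writing `g(a) = ∑ yᵢ · (tᵢ/(1 + a tᵢ))`,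
Cauchy–Schwarz with weights `yᵢ ≥ 0` gives `g(a)² ≤ M·S`, so the bracket is `≤ 0`.
-/

open Finset

theorem sq_sum_mul_le_sum_mul_sum_mul_sq {ι : Type*} (s : Finset ι) {w f : ι → ℝ}
    (hw : ∀ i ∈ s, 0 ≤ w i) :
    (∑ i ∈ s, w i * f i) ^ 2 ≤ (∑ i ∈ s, w i) * ∑ i ∈ s, w i * f i ^ 2 :=
  sum_sq_le_sum_mul_sum_of_sq_le_mul s hw (fun i hi => mul_nonneg (hw i hi) (sq_nonneg _))
    fun i _ => le_of_eq (by ring)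

theorem hasDerivAt_mul_div_one_add_mul {c t a : ℝ} (h : c ≠ 0 → 1 + a * t ≠ 0) :
    HasDerivAt (fun b => c * t / (1 + b * t)) (-(c * t ^ 2 / (1 + a * t) ^ 2)) a := by
  rcases eq_or_ne c 0 with rfl | hc
  · simpa using hasDerivAt_const a (0 : ℝ)
  · have hden : HasDerivAt (fun b : ℝ => 1 + b * t) t a := by
      simpa using ((hasDerivAt_id a).mul_const t).const_add 1
    exact ((hasDerivAt_const a (c * t)).fun_div hden (h hc)).congr_deriv (by ring)

theorem hasDerivAt_one_add_mul_sub_div {g : ℝ → ℝ} {g' a : ℝ} (R M : ℝ) (hg : HasDerivAt g g' a)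
    (hga : g a ≠ 0) :
    HasDerivAt (fun b => 1 + R / 2 * (b - M / g b)) (R / 2 + M * R / 2 * (g' / g a ^ 2)) a := by
  have hquot := (hasDerivAt_const a M).fun_div hg hga
  refine ((((hasDerivAt_id' a).fun_sub hquot).const_mul (R / 2)).const_add 1).congr_deriv ?_
  field_simp
  ring

theorem half_add_mul_neg_div_sq_nonpos {R M S G : ℝ} (hR : 0 ≤ R) (hG : G ≠ 0)
    (hCS : G ^ 2 ≤ M * S) : R / 2 + M * R / 2 * (-S / G ^ 2) ≤ 0 := by
  have hG2 : 0 < G ^ 2 := by positivity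
  have hratio : 1 ≤ M * S / G ^ 2 := (one_le_div hG2).mpr hCS
  have hfactor : R / 2 + M * R / 2 * (-S / G ^ 2) = R / 2 * (1 - M * S / G ^ 2) := by
    field_simp
    ring
  rw [hfactor]
  exact mul_nonpos_of_nonneg_of_nonpos (by positivity) (by linarith)

theorem cash_linear_F_deriv_nonpos_general
    (N : ℕ) (x : Fin N → ℝ) (xA R : ℝ)
    (hRpos : 0 < R)
    (y : Fin N → ℕ)
    (g F : ℝ → ℝ)
    (hg : ∀ a, g a = ∑ i, (y i : ℝ) * (x i - xA) / (1 + a * (x i - xA)))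
    (hF : ∀ a, F a = 1 + (R / 2) * (a - (∑ i, (y i : ℝ)) / g a))
    (a : ℝ) (ha : ∀ i, 0 < y i → 1 + a * (x i - xA) ≠ 0) (hga : g a ≠ 0) :
    HasDerivAt F (R / 2 + ((∑ i, (y i : ℝ)) * R / 2) *
      ((-∑ i, (y i : ℝ) * (x i - xA) ^ 2 / (1 + a * (x i - xA)) ^ 2) / (g a) ^ 2)) a ∧
    R / 2 + ((∑ i, (y i : ℝ)) * R / 2) *
      ((-∑ i, (y i : ℝ) * (x i - xA) ^ 2 / (1 + a * (x i - xA)) ^ 2) / (g a) ^ 2) ≤ 0 := by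
  have hg' : HasDerivAt g (-∑ i, (y i : ℝ) * (x i - xA) ^ 2 / (1 + a * (x i - xA)) ^ 2) a := by
    rw [funext hg, ← sum_neg_distrib]
    exact HasDerivAt.fun_sum fun i _ => hasDerivAt_mul_div_one_add_mul fun hy =>
      ha i (Nat.pos_of_ne_zero (by exact_mod_cast hy))
  have hCS : g a ^ 2 ≤ (∑ i, (y i : ℝ)) *
      ∑ i, (y i : ℝ) * (x i - xA) ^ 2 / (1 + a * (x i - xA)) ^ 2 := by
    have := sq_sum_mul_le_sum_mul_sum_mul_sq univ (w := fun i => (y i : ℝ))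
      (f := fun i => (x i - xA) / (1 + a * (x i - xA))) fun i _ => Nat.cast_nonneg _
    simpa only [hg a, mul_div_assoc, div_pow] using this
  refine ⟨?_, half_add_mul_neg_div_sq_nonpos hRpos.le hga hCS⟩
  rw [funext hF]
  exact hasDerivAt_one_add_mul_sub_div R _ hg' hga

/-- For `M ≥ 1` and `R > 0`, at every point `a` in the domain of `g` with
`g a ≠ 0`, `F` is differentiable with `F'(a) = R/2 + (M*R/2) * g'(a)/g(a)^2`,
and `F'(a) ≤ 0`, where `g'(a) = -∑ i, y i * (x i - xA)^2 / (1 + a * (x i - xA))^2`. -/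
theorem cash_linear_F_deriv_nonpos
    (N : ℕ) (x : Fin N → ℝ) (xA xB R : ℝ)
    (hx : ∀ i, xA < x i ∧ x i < xB)
    (hR : R = xB - xA) (hRpos : 0 < R)
    (y : Fin N → ℕ) (hM : 1 ≤ ∑ i, y i)
    (g F : ℝ → ℝ)
    (hg : ∀ a, g a = ∑ i, (y i : ℝ) * (x i - xA) / (1 + a * (x i - xA)))
    (hF : ∀ a, F a = 1 + (R / 2) * (a - (∑ i, (y i : ℝ)) / g a))
    (a : ℝ) (ha : ∀ i, 0 < y i → 1 + a * (x i - xA) ≠ 0) (hga : g a ≠ 0) :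
    HasDerivAt F (R / 2 + ((∑ i, (y i : ℝ)) * R / 2) *
      ((-∑ i, (y i : ℝ) * (x i - xA) ^ 2 / (1 + a * (x i - xA)) ^ 2) / (g a) ^ 2)) a ∧
    R / 2 + ((∑ i, (y i : ℝ)) * R / 2) *
      ((-∑ i, (y i : ℝ) * (x i - xA) ^ 2 / (1 + a * (x i - xA)) ^ 2) / (g a) ^ 2) ≤ 0 :=
  cash_linear_F_deriv_nonpos_general N x xA R hRpos y g F hg hF a ha hga
end

section
/- Assume M ≥ 1. Let j be an index with y_j ≥ 1 such that x_j ≠ x_i for every other index i with y_i ≥ 1, and set a_j = −1/(x_j − x_A). Then F(a) tends to 1 + a_j·R/2 as a tends to a_j (from either side); that is, the limit of F at each singularity of g equals 1 + a_j·R/2. -/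
/-!
Splitting off the `j`-th term, `g(a) = y_j / (a - a_j) + h(a)` where `h` is continuous at
`a_j` because no other counted bin has its pole there. Hence
`1 / g(a) = (a - a_j) / (y_j + (a - a_j) h(a)) → 0`, and `F(a) → 1 + (R/2) a_j`.
-/

open Filter Topology

theorem tendsto_inv_nhdsNE_zero_of_eq_div_sub_add {g h : ℝ → ℝ} {a₀ c L : ℝ} (hc : c ≠ 0)
    (hh : Tendsto h (𝓝[≠] a₀) (𝓝 L)) (hg : ∀ a ≠ a₀, g a = c / (a - a₀) + h a) :
    Tendsto (fun a => (g a)⁻¹) (𝓝[≠] a₀) (𝓝 0) := by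
  have hsub : Tendsto (fun a => a - a₀) (𝓝[≠] a₀) (𝓝 0) := by
    simpa using (tendsto_id.sub_const a₀).mono_left (nhdsWithin_le_nhds (a := a₀))
  have hlim : Tendsto (fun a => (a - a₀) / (c + (a - a₀) * h a)) (𝓝[≠] a₀) (𝓝 0) := by
    have := hsub.div (tendsto_const_nhds.add (hsub.mul hh)) (by rwa [zero_mul, add_zero])
    rwa [zero_mul, add_zero, zero_div] at this
  refine hlim.congr' ?_
  filter_upwards [self_mem_nhdsWithin] with a (ha : a ≠ a₀)
  have ha' : a - a₀ ≠ 0 := sub_ne_zero.mpr ha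
  rw [hg a ha, div_add' _ _ _ ha', inv_div, mul_comm]

theorem mul_div_one_add_mul_eq_div_sub {u : ℝ} (hu : u ≠ 0) (w a : ℝ) :
    w * u / (1 + a * u) = w / (a - -1 / u) := by
  rw [show 1 + a * u = (a - -1 / u) * u by field_simp; ring, mul_div_mul_right _ _ hu]

theorem continuousAt_mul_div_one_add_mul {w u a₀ : ℝ} (h : w = 0 ∨ 1 + a₀ * u ≠ 0) :
    ContinuousAt (fun a => w * u / (1 + a * u)) a₀ := by
  rcases h with rfl | h
  · simpa using continuousAt_const
  · exact continuousAt_const.div (by fun_prop) h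

theorem tendsto_inv_sum_mul_div_one_add_mul {ι : Type*} [Fintype ι] [DecidableEq ι]
    {w u : ι → ℝ} {j : ι} (hwj : w j ≠ 0) (huj : u j ≠ 0)
    (hsimple : ∀ i ≠ j, w i ≠ 0 → u i ≠ u j) :
    Tendsto (fun a => (∑ i, w i * u i / (1 + a * u i))⁻¹) (𝓝[≠] (-1 / u j)) (𝓝 0) := by
  set rest := fun a => ∑ i ∈ Finset.univ.erase j, w i * u i / (1 + a * u i)
  have hsplit : ∀ a, ∑ i, w i * u i / (1 + a * u i) = w j / (a - -1 / u j) + rest a := by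
    intro a
    rw [← Finset.add_sum_erase _ _ (Finset.mem_univ j), mul_div_one_add_mul_eq_div_sub huj]
  have hrest : ContinuousAt rest (-1 / u j) := by
    refine tendsto_finsetSum _ fun i hi => continuousAt_mul_div_one_add_mul ?_
    refine or_iff_not_imp_left.mpr fun hwi hpole => ?_
    refine hsimple i (Finset.ne_of_mem_erase hi) hwi ?_
    field_simp at hpole
    linarith
  exact tendsto_inv_nhdsNE_zero_of_eq_div_sub_add hwj
    (hrest.tendsto.mono_left nhdsWithin_le_nhds) fun a _ => hsplit a

theorem cash_linear_F_limit_at_g_singularity_general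
    (N : ℕ) (x : Fin N → ℝ) (xA xB R : ℝ)
    (hx : ∀ i, xA < x i ∧ x i < xB)
    (y : Fin N → ℕ)
    (j : Fin N) (hyj : 1 ≤ y j)
    (hunique : ∀ i, i ≠ j → 1 ≤ y i → x i ≠ x j)
    (g F : ℝ → ℝ)
    (hg : ∀ a, g a = ∑ i, (y i : ℝ) * (x i - xA) / (1 + a * (x i - xA)))
    (hF : ∀ a, F a = 1 + (R / 2) * (a - (∑ i, (y i : ℝ)) / g a)) :
    Filter.Tendsto F (nhdsWithin (-1 / (x j - xA)) {(-1 / (x j - xA))}ᶜ)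
      (nhds (1 + (-1 / (x j - xA)) * R / 2)) := by
  have hinv : Tendsto (fun a => (g a)⁻¹) (𝓝[≠] (-1 / (x j - xA))) (𝓝 0) := by
    simp only [hg]
    refine tendsto_inv_sum_mul_div_one_add_mul (Nat.cast_ne_zero.mpr (by omega))
      (sub_pos.mpr (hx j).1).ne' fun i hi hyi => ?_
    have hyi' : 1 ≤ y i := Nat.one_le_iff_ne_zero.mpr (by exact_mod_cast hyi)
    exact sub_left_injective.ne (hunique i hi hyi')
  have hid : Tendsto id (𝓝[≠] (-1 / (x j - xA))) (𝓝 (-1 / (x j - xA))) :=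
    tendsto_id.mono_left nhdsWithin_le_nhds
  have hF' : F = fun a => 1 + R / 2 * (id a - (∑ i, (y i : ℝ)) * (g a)⁻¹) :=
    funext fun a => by simp only [hF, id, div_eq_mul_inv]
  rw [hF', show 1 + -1 / (x j - xA) * R / 2
    = 1 + R / 2 * (-1 / (x j - xA) - (∑ i, (y i : ℝ)) * 0) by ring]
  exact ((hid.sub (hinv.const_mul _)).const_mul _).const_add 1

/-- For `M ≥ 1`, at a singularity `a_j = -1/(x j - xA)` of `g`
(bin `j` carries a count and no other counted bin shares its center),
`F(a)` tends to `1 + a_j * R / 2` as `a → a_j` (from either side). -/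
theorem cash_linear_F_limit_at_g_singularity
    (N : ℕ) (x : Fin N → ℝ) (xA xB R : ℝ)
    (hx : ∀ i, xA < x i ∧ x i < xB)
    (hR : R = xB - xA) (hRpos : 0 < R)
    (y : Fin N → ℕ) (hM : 1 ≤ ∑ i, y i)
    (j : Fin N) (hyj : 1 ≤ y j)
    (hunique : ∀ i, i ≠ j → 1 ≤ y i → x i ≠ x j)
    (g F : ℝ → ℝ)
    (hg : ∀ a, g a = ∑ i, (y i : ℝ) * (x i - xA) / (1 + a * (x i - xA)))
    (hF : ∀ a, F a = 1 + (R / 2) * (a - (∑ i, (y i : ℝ)) / g a)) :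
    Filter.Tendsto F (nhdsWithin (-1 / (x j - xA)) {(-1 / (x j - xA))}ᶜ)
      (nhds (1 + (-1 / (x j - xA)) * R / 2)) :=
  cash_linear_F_limit_at_g_singularity_general N x xA xB R hx y j hyj hunique g F hg hF
end

section
/- Assume: the first bin carries a count, y_1 ≥ 1 with x_1 − x_A = Δx_1/2; every index i with y_i ≥ 1 satisfies Δx_1/2 ≤ x_i − x_A ≤ R − Δx_N/2; there are at least two indices with positive counts at distinct centers; R > Δx_1; and the asymptotic value F_∞ = 1 − (R/(2M))·Σ_{i=1}^N y_i/(x_i − x_A) is strictly positive. Then there exists a real number a < −2/Δx_1 such that 1 + a·(x_i − x_A) ≠ 0 for all i with y_i > 0, g(a) ≠ 0, and F(a) = 0; i.e., the external solution of F(a) = 0 exists and is acceptable. -/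
/-!
With weights `w i = y i` and offsets `d i = x i - xA`, the function `g` is `poleSum w d`. For
`a < -2 / Δx₁` every counted denominator `1 + a * d i` is negative, so `g < 0` and `F` is
continuous there. As `a → -∞`, `a * g a → M` and `a * (a * g a - M) → -∑ y i / d i`, hence
`F a → F_∞ > 0`. As `a ↑ -2 / Δx₁` the term of the first bin drives `g` to `-∞`, hence
`F a → 1 - R / Δx₁ < 0`. The intermediate value theorem gives the root.
-/

open Filter Finset Set Topology

noncomputable def poleSum {ι : Type*} [Fintype ι] (w d : ι → ℝ) (a : ℝ) : ℝ :=
  ∑ i, w i * d i / (1 + a * d i)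

section AtBot

variable {ι : Type*} [Fintype ι] {w d : ι → ℝ}

lemma tendsto_const_div_inv_add_atBot (c : ℝ) {b : ℝ} (hb : b ≠ 0) :
    Tendsto (fun a : ℝ => c / (a⁻¹ + b)) atBot (𝓝 (c / b)) := by
  have h := (tendsto_const_nhds (x := c)).div (tendsto_inv_atBot_zero.add_const b)
    (by rwa [zero_add])
  rwa [zero_add] at h

lemma mul_poleSum_eq {a : ℝ} (ha : a ≠ 0) :
    a * poleSum w d a = ∑ i, w i * d i / (a⁻¹ + d i) := by
  rw [poleSum, mul_sum]
  refine sum_congr rfl fun i _ => ?_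
  rw [show a⁻¹ + d i = (1 + a * d i) / a by field_simp, div_div_eq_mul_div]
  ring

lemma mul_mul_poleSum_sub_eq {a : ℝ} (ha : a ≠ 0) (hden : ∀ i, w i ≠ 0 → a⁻¹ + d i ≠ 0) :
    a * (a * poleSum w d a - ∑ i, w i) = -∑ i, w i / (a⁻¹ + d i) := by
  rw [mul_poleSum_eq ha, ← sum_sub_distrib, mul_sum, ← sum_neg_distrib]
  refine sum_congr rfl fun i _ => ?_
  by_cases hw : w i = 0
  · simp [hw]
  · have h := hden i hw
    rw [show a⁻¹ + d i = (1 + a * d i) / a by field_simp] at h ⊢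
    have h' : 1 + a * d i ≠ 0 := fun h0 => h (by rw [h0, zero_div])
    field_simp
    ring

variable (hd : ∀ i, w i ≠ 0 → d i ≠ 0)
include hd

lemma tendsto_mul_poleSum_atBot :
    Tendsto (fun a => a * poleSum w d a) atBot (𝓝 (∑ i, w i)) := by
  have hterm : ∀ i, Tendsto (fun a : ℝ => w i * d i / (a⁻¹ + d i)) atBot (𝓝 (w i)) := by
    intro i
    by_cases hw : w i = 0
    · simp [hw]
    · simpa [mul_div_cancel_right₀ _ (hd i hw)] using
        tendsto_const_div_inv_add_atBot (w i * d i) (hd i hw)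
  refine (tendsto_finsetSum _ fun i _ => hterm i).congr' ?_
  filter_upwards [eventually_ne_atBot 0] with a ha
  exact (mul_poleSum_eq ha).symm

lemma tendsto_mul_mul_poleSum_sub_atBot :
    Tendsto (fun a => a * (a * poleSum w d a - ∑ i, w i)) atBot (𝓝 (-∑ i, w i / d i)) := by
  have hden : ∀ᶠ a : ℝ in atBot, ∀ i, w i ≠ 0 → a⁻¹ + d i ≠ 0 := by
    refine eventually_all.2 fun i => ?_
    by_cases hw : w i = 0
    · exact Eventually.of_forall fun _ h => absurd hw h
    · filter_upwards [(tendsto_inv_atBot_zero.add_const (d i)).eventually_ne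
        (by simpa using hd i hw)] with a ha _ using ha
  have hterm : ∀ i, Tendsto (fun a : ℝ => w i / (a⁻¹ + d i)) atBot (𝓝 (w i / d i)) := by
    intro i
    by_cases hw : w i = 0
    · simp [hw]
    · exact tendsto_const_div_inv_add_atBot (w i) (hd i hw)
  refine (tendsto_finsetSum _ fun i _ => hterm i).neg.congr' ?_
  filter_upwards [eventually_ne_atBot 0, hden] with a ha ha'
  exact (mul_mul_poleSum_sub_eq ha ha').symm

lemma tendsto_sub_div_poleSum_atBot (hw : ∑ i, w i ≠ 0) :
    Tendsto (fun a => a - (∑ i, w i) / poleSum w d a) atBot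
      (𝓝 (-(∑ i, w i / d i) / ∑ i, w i)) := by
  have hlin := tendsto_mul_poleSum_atBot hd
  refine ((tendsto_mul_mul_poleSum_sub_atBot hd).div hlin hw).congr' ?_
  filter_upwards [hlin.eventually_ne hw] with a ha
  have ha0 : a ≠ 0 := left_ne_zero_of_mul ha
  have hg : poleSum w d a ≠ 0 := right_ne_zero_of_mul ha
  simp only [Pi.div_apply]
  field_simp

end AtBot

lemma one_add_mul_neg_of_lt_neg_inv {a b δ : ℝ} (hδ : 0 < δ) (ha : a < -δ⁻¹) (hb : δ ≤ b) :
    1 + a * b < 0 := by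
  have haδ : a * δ < -1 := by
    simpa [hδ.ne'] using mul_lt_mul_of_pos_right ha hδ
  nlinarith

section NearPole

variable {ι : Type*} [Fintype ι] {w d : ι → ℝ} {δ : ℝ}
  (hδ : 0 < δ) (hd : ∀ i, w i ≠ 0 → δ ≤ d i)
include hδ hd

lemma continuousOn_poleSum : ContinuousOn (poleSum w d) (Iio (-δ⁻¹)) := by
  refine continuousOn_finsetSum _ fun i _ => ?_
  by_cases hw : w i = 0
  · simp only [hw, zero_mul, zero_div]
    exact continuousOn_const
  · exact continuousOn_const.div (by fun_prop) fun a ha =>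
      (one_add_mul_neg_of_lt_neg_inv hδ ha (hd i hw)).ne

variable (hw : ∀ i, 0 ≤ w i)
include hw

lemma poleSum_le_term {a : ℝ} (ha : a < -δ⁻¹) (j : ι) :
    poleSum w d a ≤ w j * d j / (1 + a * d j) := by
  classical
  have hterm : ∀ i, w i * d i / (1 + a * d i) ≤ 0 := by
    intro i
    by_cases hwi : w i = 0
    · simp [hwi]
    · exact div_nonpos_of_nonneg_of_nonpos
        (mul_nonneg (hw i) (hδ.le.trans (hd i hwi)))
        (one_add_mul_neg_of_lt_neg_inv hδ ha (hd i hwi)).le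
  rw [poleSum, ← add_sum_erase _ _ (mem_univ j)]
  exact add_le_of_nonpos_right (sum_nonpos fun i _ => hterm i)

lemma poleSum_neg {a : ℝ} (ha : a < -δ⁻¹) {j : ι} (hj : w j ≠ 0) : poleSum w d a < 0 :=
  (poleSum_le_term hδ hd hw ha j).trans_lt <| div_neg_of_pos_of_neg
    (mul_pos ((hw j).lt_of_ne' hj) (hδ.trans_le (hd j hj)))
    (one_add_mul_neg_of_lt_neg_inv hδ ha (hd j hj))

lemma tendsto_poleSum_nhdsLT_atBot {j : ι} (hj : w j ≠ 0) (hdj : d j = δ) :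
    Tendsto (poleSum w d) (𝓝[<] (-δ⁻¹)) atBot := by
  have hden : Tendsto (fun a => 1 + a * δ) (𝓝[<] (-δ⁻¹)) (𝓝[<] 0) := by
    refine tendsto_nhdsWithin_of_tendsto_nhds_of_eventually_within _ ?_ ?_
    · have h : Continuous fun a => 1 + a * δ := by fun_prop
      simpa [hδ.ne'] using (h.tendsto (-δ⁻¹)).mono_left nhdsWithin_le_nhds
    · filter_upwards [self_mem_nhdsWithin] with a ha
      exact one_add_mul_neg_of_lt_neg_inv hδ ha le_rfl
  have hpole : Tendsto (fun a => w j * d j / (1 + a * d j)) (𝓝[<] (-δ⁻¹)) atBot := by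
    simpa only [hdj, div_eq_mul_inv, Pi.inv_apply] using
      hden.inv_tendsto_nhdsLT_zero.const_mul_atBot (mul_pos ((hw j).lt_of_ne' hj) hδ)
  refine tendsto_atBot_mono' _ ?_ hpole
  filter_upwards [self_mem_nhdsWithin] with a ha
  exact poleSum_le_term hδ hd hw ha j

lemma continuousOn_sub_div_poleSum {j : ι} (hj : w j ≠ 0) (M : ℝ) :
    ContinuousOn (fun a => a - M / poleSum w d a) (Iio (-δ⁻¹)) :=
  continuousOn_id.sub (continuousOn_const.div (continuousOn_poleSum hδ hd)
    fun _ ha => (poleSum_neg hδ hd hw ha hj).ne)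

lemma tendsto_sub_div_poleSum_nhdsLT {j : ι} (hj : w j ≠ 0) (hdj : d j = δ) (M : ℝ) :
    Tendsto (fun a => a - M / poleSum w d a) (𝓝[<] (-δ⁻¹)) (𝓝 (-δ⁻¹)) := by
  simpa using (tendsto_id.mono_left nhdsWithin_le_nhds).sub
    ((tendsto_poleSum_nhdsLT_atBot hδ hd hw hj hdj).const_div_atBot M)

end NearPole

lemma exists_lt_eq_zero_of_tendsto_nhdsLT_of_tendsto_atBot {f : ℝ → ℝ} {c u v : ℝ}
    (hf : ContinuousOn f (Iio c)) (hc : Tendsto f (𝓝[<] c) (𝓝 u)) (hu : u < 0)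
    (hbot : Tendsto f atBot (𝓝 v)) (hv : 0 < v) : ∃ a < c, f a = 0 :=
  isPreconnected_Iio.intermediate_value_Ioo (le_principal_iff.2 self_mem_nhdsWithin)
    (le_principal_iff.2 (Iio_mem_atBot c)) hf hc hbot ⟨hu, hv⟩

theorem cash_linear_external_solution_left_general
    (N : ℕ) (x : Fin N → ℝ) (xA R Δx₁ ΔxN : ℝ)
    (hΔ₁ : 0 < Δx₁) (hRΔ : Δx₁ < R)
    (y : Fin N → ℕ)
    (hpos : ∀ i, 1 ≤ y i → Δx₁ / 2 ≤ x i - xA ∧ x i - xA ≤ R - ΔxN / 2)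
    (j : Fin N) (hyj : 1 ≤ y j) (hxj : x j - xA = Δx₁ / 2)
    (g F : ℝ → ℝ)
    (hg : ∀ a, g a = ∑ i, (y i : ℝ) * (x i - xA) / (1 + a * (x i - xA)))
    (hF : ∀ a, F a = 1 + (R / 2) * (a - (∑ i, (y i : ℝ)) / g a))
    (hFinf : 0 < 1 - (R / (2 * ∑ i, (y i : ℝ))) * ∑ i, (y i : ℝ) / (x i - xA)) :
    ∃ a, a < -2 / Δx₁ ∧ (∀ i, 0 < y i → 1 + a * (x i - xA) ≠ 0) ∧
      g a ≠ 0 ∧ F a = 0 := by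
  set w : Fin N → ℝ := fun i => y i
  set d : Fin N → ℝ := fun i => x i - xA
  have hδ : 0 < Δx₁ / 2 := by positivity
  have hc : -(Δx₁ / 2)⁻¹ = -2 / Δx₁ := by rw [inv_div, neg_div]
  have hw : ∀ i, 0 ≤ w i := fun i => Nat.cast_nonneg _
  have hd : ∀ i, w i ≠ 0 → Δx₁ / 2 ≤ d i := fun i hi =>
    (hpos i (Nat.one_le_iff_ne_zero.2 (Nat.cast_ne_zero.1 hi))).1
  have hj : w j ≠ 0 := by positivity
  have hM : ∑ i, w i ≠ 0 := (sum_pos' (fun i _ => hw i) ⟨j, mem_univ j, by positivity⟩).ne'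
  have hF' : F = fun a => 1 + R / 2 * (a - (∑ i, w i) / poleSum w d a) := by
    ext a; rw [hF, hg]; rfl
  have hlimBot : Tendsto F atBot (𝓝 (1 - R / (2 * ∑ i, w i) * ∑ i, w i / d i)) := by
    rw [hF']
    convert ((tendsto_sub_div_poleSum_atBot (fun i hi => (hδ.trans_le (hd i hi)).ne')
      hM).const_mul (R / 2)).const_add 1 using 2
    ring
  have hFpole : 1 + R / 2 * -(Δx₁ / 2)⁻¹ < 0 := by
    have h : R / 2 * -(Δx₁ / 2)⁻¹ = -(R / Δx₁) := by field_simp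
    linarith [(one_lt_div hΔ₁).2 hRΔ]
  obtain ⟨a, ha, hFa⟩ := exists_lt_eq_zero_of_tendsto_nhdsLT_of_tendsto_atBot
    (hF' ▸ continuousOn_const.add
      (continuousOn_const.mul (continuousOn_sub_div_poleSum hδ hd hw hj _)))
    (hF' ▸ ((tendsto_sub_div_poleSum_nhdsLT hδ hd hw hj hxj _).const_mul (R / 2)).const_add 1)
    hFpole hlimBot hFinf
  exact ⟨a, hc ▸ ha, fun i hi => (one_add_mul_neg_of_lt_neg_inv hδ ha (hd i (by positivity))).ne,
    hg a ▸ (poleSum_neg hδ hd hw ha hj).ne, hFa⟩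

/-- If the first bin carries a count (`y j ≥ 1` with
`x j - xA = Δx₁/2`), all counted centers satisfy `Δx₁/2 ≤ x i - xA ≤ R - Δx_N/2`,
there are two counted bins with distinct centers, `R > Δx₁`, and the asymptotic value
`F_∞ = 1 - (R/(2M)) * ∑ i, y i/(x i - xA)` is strictly positive, then the external
solution of `F a = 0` exists and is acceptable: there is `a < -2/Δx₁` in the domain of
`F` with `F a = 0`. -/
theorem cash_linear_external_solution_left
    (N : ℕ) (x : Fin N → ℝ) (xA R Δx₁ ΔxN : ℝ)
    (hΔ₁ : 0 < Δx₁) (hΔN : 0 < ΔxN) (hRΔ : Δx₁ < R)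
    (y : Fin N → ℕ)
    (hpos : ∀ i, 1 ≤ y i → Δx₁ / 2 ≤ x i - xA ∧ x i - xA ≤ R - ΔxN / 2)
    (j : Fin N) (hyj : 1 ≤ y j) (hxj : x j - xA = Δx₁ / 2)
    (k l : Fin N) (hkl : k ≠ l) (hyk : 1 ≤ y k) (hyl : 1 ≤ y l) (hxkl : x k ≠ x l)
    (g F : ℝ → ℝ)
    (hg : ∀ a, g a = ∑ i, (y i : ℝ) * (x i - xA) / (1 + a * (x i - xA)))
    (hF : ∀ a, F a = 1 + (R / 2) * (a - (∑ i, (y i : ℝ)) / g a))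
    (hFinf : 0 < 1 - (R / (2 * ∑ i, (y i : ℝ))) * ∑ i, (y i : ℝ) / (x i - xA)) :
    ∃ a, a < -2 / Δx₁ ∧ (∀ i, 0 < y i → 1 + a * (x i - xA) ≠ 0) ∧
      g a ≠ 0 ∧ F a = 0 :=
  cash_linear_external_solution_left_general N x xA R Δx₁ ΔxN hΔ₁ hRΔ y hpos j hyj hxj g F hg hF
    hFinf
end

section
/- Assume R > 0, M = Σ_{i=1}^N y_i ≥ 1, and let the gaps be given by g disjoint subintervals of [x_A, x_B] with total length R_G = Σ_{j=1}^g R_{G,j} < R, mid-points x_{G,j}, S_G = Σ_{j=1}^g R_{G,j}·(x_{G,j} − x_A), and set R_m = (R² − 2S_G)/(R − R_G). On the domain of pairs (λ, a) with λ > 0 and 1 + a·(x_i − x_A) > 0 for every i with y_i > 0, define C(λ, a) = 2λR·(1 + aR/2) − 2λ·Σ_{j=1}^g R_{G,j}·(1 + a·(x_{G,j} − x_A)) − 2M·ln(λ) − 2·Σ_{i=1}^N y_i·ln(1 + a·(x_i − x_A)). Then ∂C/∂λ = 0 and ∂C/∂a = 0 hold simultaneously at (λ, a) if and only if R·(1 +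 aR/2) − (R_G + a·S_G) > 0, λ = M/(R·(1 + aR/2) − (R_G + a·S_G)), g(a) ≠ 0, and 1 + a·R_m/2 − M·R_m/(2·g(a)) = 0. -/
/-!
With `D(a) = (R - R_G) + a (R² - 2 S_G) / 2` the two partial derivatives are
`∂C/∂λ = 2 D(a) - 2M/λ` and `∂C/∂a = λ (R² - 2 S_G) - 2 g(a)`, so stationarity means `λ D(a) = M`
and `2 g(a) = λ (R² - 2 S_G)`; eliminating `λ` gives the `R_m` equation. The forward direction needs
`R² - 2 S_G ≠ 0`, which comes from geometry: disjoint gaps of total length `R_G` below `x_B` have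
first moment about `x_A` at most that of `[x_B - R_G, x_B]`, i.e. `(R - R_G)² ≤ R² - 2 S_G`.
Removing the gap with the largest midpoint, which lies left of `x_B` and right of all other gaps,
proves this by induction.
-/

open Real Finset

theorem sq_sub_sum_length_add_two_mul_moment_le {ι : Type*} (s : Finset ι) (xa xb : ι → ℝ)
    (x₀ x₁ : ℝ) (hle : ∀ j ∈ s, xa j ≤ xb j ∧ xb j ≤ x₁)
    (hdisj : (s : Set ι).Pairwise fun j k => xb j ≤ xa k ∨ xb k ≤ xa j) :
    (x₁ - x₀ - ∑ j ∈ s, (xb j - xa j)) ^ 2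
      + 2 * ∑ j ∈ s, (xb j - xa j) * ((xa j + xb j) / 2 - x₀) ≤ (x₁ - x₀) ^ 2 := by
  classical
  induction s using Finset.induction_on_max_value (fun j => xa j + xb j) generalizing x₁ with
  | empty => simp
  | insert j s hj hmax ih =>
    obtain ⟨hlen, hright⟩ := hle j (mem_insert_self j s)
    have hleft : ∀ k ∈ s, xb k ≤ xa j := fun k hk => by
      have hkj : k ≠ j := ne_of_mem_of_not_mem hk hj
      rcases hdisj (mem_insert_of_mem hk) (mem_insert_self j s) hkj with h | h
      · exact h
      · linarith [hmax k hk, (hle k (mem_insert_of_mem hk)).1]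
    have hs := ih (xa j) (fun k hk => ⟨(hle k (mem_insert_of_mem hk)).1, hleft k hk⟩)
      (hdisj.mono (by simp))
    have hT : 0 ≤ ∑ k ∈ s, (xb k - xa k) :=
      sum_nonneg fun k hk => sub_nonneg.2 (hle k (mem_insert_of_mem hk)).1
    rw [sum_insert hj, sum_insert hj]
    nlinarith [mul_nonneg (sub_nonneg.2 hright) (add_nonneg (sub_nonneg.2 hlen) hT)]

theorem hasDerivAt_sum_mul_log_one_add_mul {ι : Type*} (s : Finset ι) (w t : ι → ℝ) (a : ℝ)
    (h : ∀ i ∈ s, w i ≠ 0 → 1 + a * t i ≠ 0) :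
    HasDerivAt (fun a => ∑ i ∈ s, w i * log (1 + a * t i))
      (∑ i ∈ s, w i * t i / (1 + a * t i)) a := by
  refine HasDerivAt.fun_sum fun i hi => ?_
  by_cases hw : w i = 0
  · simpa [hw] using hasDerivAt_const a (0 : ℝ)
  · have hlin : HasDerivAt (fun a => 1 + a * t i) (t i) a := by
      simpa using ((hasDerivAt_id a).mul_const (t i)).const_add 1
    simpa [mul_div_assoc] using (hlin.log (h i hi hw)).const_mul (w i)

theorem cash_score_equations_iff {M l a E Q D g Rm : ℝ} (hM : 0 < M) (hl : 0 < l)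
    (hE : E ≠ 0) (hQ : Q ≠ 0) (hD : D = E + a * Q / 2) (hRm : Rm = Q / E) :
    (2 * D - 2 * M / l = 0 ∧ l * Q - 2 * g = 0) ↔
      (0 < D ∧ l = M / D ∧ g ≠ 0 ∧ 1 + a * Rm / 2 - M * Rm / (2 * g) = 0) := by
  subst hRm
  constructor
  · rintro ⟨hDl, hg⟩
    have hMD : M = l * D := by field_simp at hDl; linarith
    have hg' : g = l * Q / 2 := by linarith
    have hD0 : 0 < D := by rw [hMD] at hM; exact pos_of_mul_pos_right hM hl.le
    refine ⟨hD0, by rw [hMD]; field_simp, by rw [hg']; positivity, ?_⟩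
    rw [hg', hMD, hD]
    field_simp
    ring
  · rintro ⟨hD0, hlD, hg, hstat⟩
    have hMD : M = l * D := by rw [hlD]; field_simp
    have hgD : 2 * g * D = M * Q := by
      field_simp at hstat
      linear_combination hstat + 2 * g * hD
    have hgl : 2 * g = l * Q :=
      mul_right_cancel₀ hD0.ne' (by linear_combination hgD + Q * hMD)
    constructor
    · rw [hMD]; field_simp; ring
    · linarith

theorem cash_linear_stationary_iff_with_gaps_general
    (N : ℕ) (x : Fin N → ℝ) (xA xB R : ℝ)
    (hR : R = xB - xA)
    (y : Fin N → ℕ) (hM : 1 ≤ ∑ i, y i)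
    (G : ℕ) (xa xb : Fin G → ℝ)
    (hgap : ∀ j, xA ≤ xa j ∧ xa j ≤ xb j ∧ xb j ≤ xB)
    (hdisj : ∀ j k, j ≠ k → xb j ≤ xa k ∨ xb k ≤ xa j)
    (RG SG Rm : ℝ)
    (hRG : RG = ∑ j, (xb j - xa j)) (hRGlt : RG < R)
    (hSG : SG = ∑ j, (xb j - xa j) * ((xa j + xb j) / 2 - xA))
    (hRm : Rm = (R ^ 2 - 2 * SG) / (R - RG))
    (C : ℝ → ℝ → ℝ)
    (hC : ∀ l a, C l a = 2 * l * R * (1 + a * R / 2)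
      - 2 * l * ∑ j, (xb j - xa j) * (1 + a * ((xa j + xb j) / 2 - xA))
      - 2 * (∑ i, (y i : ℝ)) * Real.log l
      - 2 * ∑ i, (y i : ℝ) * Real.log (1 + a * (x i - xA)))
    (l a : ℝ) (hl : 0 < l) (ha : ∀ i, 0 < y i → 0 < 1 + a * (x i - xA)) :
    (deriv (fun l' => C l' a) l = 0 ∧ deriv (fun a' => C l a') a = 0) ↔
      (0 < R * (1 + a * R / 2) - (RG + a * SG) ∧
       l = (∑ i, (y i : ℝ)) / (R * (1 + a * R / 2) - (RG + a * SG)) ∧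
       (∑ i, (y i : ℝ) * (x i - xA) / (1 + a * (x i - xA))) ≠ 0 ∧
       1 + a * Rm / 2 - (∑ i, (y i : ℝ)) * Rm /
         (2 * ∑ i, (y i : ℝ) * (x i - xA) / (1 + a * (x i - xA))) = 0) := by
  have hM0 : (0 : ℝ) < ∑ i, (y i : ℝ) := by
    have : (1 : ℝ) ≤ ∑ i, (y i : ℝ) := by exact_mod_cast hM
    linarith
  have hQ : (R - RG) ^ 2 ≤ R ^ 2 - 2 * SG := by
    have := sq_sub_sum_length_add_two_mul_moment_le univ xa xb xA xB (fun j _ => (hgap j).2)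
      fun j _ k _ hjk => hdisj j k hjk
    rw [hR, hRG, hSG]
    linarith
  have hgaps (t : ℝ) :
      ∑ j, (xb j - xa j) * (1 + t * ((xa j + xb j) / 2 - xA)) = RG + t * SG := by
    rw [hRG, hSG, mul_sum, ← sum_add_distrib]
    exact sum_congr rfl fun j _ => by ring
  have hdl : HasDerivAt (fun l' => C l' a)
      (2 * (R * (1 + a * R / 2) - (RG + a * SG)) - 2 * (∑ i, (y i : ℝ)) / l) l := by
    have h := (((hasDerivAt_id l).const_mul (2 * (R * (1 + a * R / 2) - (RG + a * SG)))).sub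
      ((hasDerivAt_log hl.ne').const_mul (2 * ∑ i, (y i : ℝ)))).sub_const
      (2 * ∑ i, (y i : ℝ) * log (1 + a * (x i - xA)))
    refine (h.congr_deriv (by ring)).congr_of_eventuallyEq (.of_forall fun t => ?_)
    simp only [hC, hgaps, Pi.sub_apply, id]
    ring
  have hda : HasDerivAt (fun a' => C l a')
      (l * (R ^ 2 - 2 * SG) - 2 * ∑ i, (y i : ℝ) * (x i - xA) / (1 + a * (x i - xA))) a := by
    have hlog := hasDerivAt_sum_mul_log_one_add_mul univ (fun i => (y i : ℝ)) (fun i => x i - xA)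
      a fun i _ hy => (ha i (Nat.pos_of_ne_zero (by exact_mod_cast hy))).ne'
    have h := (((hasDerivAt_id a).const_mul (l * (R ^ 2 - 2 * SG))).add_const
      (2 * l * (R - RG) - 2 * (∑ i, (y i : ℝ)) * log l)).sub (hlog.const_mul 2)
    refine (h.congr_deriv (by ring)).congr_of_eventuallyEq (.of_forall fun t => ?_)
    simp only [hC, hgaps, Pi.sub_apply, id]
    ring
  rw [hdl.deriv, hda.deriv]
  exact cash_score_equations_iff hM0 hl (sub_pos.2 hRGlt).ne'
    (lt_of_lt_of_le (pow_pos (sub_pos.2 hRGlt) 2) hQ).ne' (by ring) hRm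

/-- For data with gaps (disjoint subintervals of `[xA, xB]` with total
length `R_G < R`, midpoints `x_{G,j}`, `S_G = ∑ R_{G,j}*(x_{G,j} - xA)`, and
`R_m = (R² - 2 S_G)/(R - R_G)`), on the domain `λ > 0`, `1 + a*(x i - xA) > 0`
for all counted `i`, the stationarity conditions `∂C/∂λ = 0` and `∂C/∂a = 0` for the
gapped Cash statistic hold simultaneously if and only if
`R*(1 + a*R/2) - (R_G + a*S_G) > 0`, `λ = M/(R*(1 + a*R/2) - (R_G + a*S_G))`,
`g(a) ≠ 0` and `1 + a*R_m/2 - M*R_m/(2*g(a)) = 0`. -/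
theorem cash_linear_stationary_iff_with_gaps
    (N : ℕ) (x : Fin N → ℝ) (xA xB R : ℝ)
    (hx : ∀ i, xA < x i ∧ x i < xB)
    (hR : R = xB - xA) (hRpos : 0 < R)
    (y : Fin N → ℕ) (hM : 1 ≤ ∑ i, y i)
    (G : ℕ) (xa xb : Fin G → ℝ)
    (hgap : ∀ j, xA ≤ xa j ∧ xa j ≤ xb j ∧ xb j ≤ xB)
    (hdisj : ∀ j k, j ≠ k → xb j ≤ xa k ∨ xb k ≤ xa j)
    (RG SG Rm : ℝ)
    (hRG : RG = ∑ j, (xb j - xa j)) (hRGlt : RG < R)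
    (hSG : SG = ∑ j, (xb j - xa j) * ((xa j + xb j) / 2 - xA))
    (hRm : Rm = (R ^ 2 - 2 * SG) / (R - RG))
    (C : ℝ → ℝ → ℝ)
    (hC : ∀ l a, C l a = 2 * l * R * (1 + a * R / 2)
      - 2 * l * ∑ j, (xb j - xa j) * (1 + a * ((xa j + xb j) / 2 - xA))
      - 2 * (∑ i, (y i : ℝ)) * Real.log l
      - 2 * ∑ i, (y i : ℝ) * Real.log (1 + a * (x i - xA)))
    (l a : ℝ) (hl : 0 < l) (ha : ∀ i, 0 < y i → 0 < 1 + a * (x i - xA)) :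
    (deriv (fun l' => C l' a) l = 0 ∧ deriv (fun a' => C l a') a = 0) ↔
      (0 < R * (1 + a * R / 2) - (RG + a * SG) ∧
       l = (∑ i, (y i : ℝ)) / (R * (1 + a * R / 2) - (RG + a * SG)) ∧
       (∑ i, (y i : ℝ) * (x i - xA) / (1 + a * (x i - xA))) ≠ 0 ∧
       1 + a * Rm / 2 - (∑ i, (y i : ℝ)) * Rm /
         (2 * ∑ i, (y i : ℝ) * (x i - xA) / (1 + a * (x i - xA))) = 0) :=
  cash_linear_stationary_iff_with_gaps_general N x xA xB R hR y hM G xa xb hgap hdisj RG SG Rm hRG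
    hRGlt hSG hRm C hC l a hl ha
end
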